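/- arXiv:1404.3298 — 4 statements merged into one kernel-verified Lean document; each statement's English description precedes it below -/
import Mathlib

section
/- Let W : ℝ^{3×3} → [0,∞) satisfy: W(R) = 0 and W(RF) = W(F) for all R ∈ SO(3) and all F ∈ ℝ^{3×3}; W(F) ≥ c·dist²(F, SO(3)) for all F, with a constant c > 0; and suppose there is a quadratic form Q₃ on ℝ^{3×3} and a monotone nonnegative function ω : [0,∞) → [0,∞] with lim_{t→0⁺} ω(t) = 0 such that |W(Id₃ + F) − Q₃(F)| ≤ ω(|F|)·|F|² for all F ∈ ℝ^{3×3}. Then: (a) Q₃(F) ≥ 0 for all F; (b) Q₃(F) = Q₃(sym F) for all F, where sym F = (F + Fᵀ)/2; and (c) Q₃(F) ≥ (c/2)·|F|² for all symmetric F ∈ ℝ^{3×3}; in particular Q₃ is positive definite on symmetric matrices. -/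
noncomputable section

open Real
open scoped ENNReal

/-- The 3×3 real matrices. -/
abbrev M3 : Type := Matrix (Fin 3) (Fin 3) ℝ

/-- The special orthogonal group SO(3). -/
def SO3 : Set M3 := {R | R * R.transpose = 1 ∧ R.det = 1}

/-- Frobenius norm of a 3×3 matrix. -/
def fnorm3 (F : M3) : ℝ := Real.sqrt (∑ i : Fin 3, ∑ j : Fin 3, (F i j) ^ 2)

/-- Frobenius distance of a matrix to SO(3). -/
def distSO3 (F : M3) : ℝ := sInf ((fun R => fnorm3 (F - R)) '' SO3)

/-- The symmetric part of a matrix. -/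
def symm3 (F : M3) : M3 := (1 / 2 : ℝ) • (F + F.transpose)

/-- Sum of squares of entries. -/
def S2 (F : M3) : ℝ := ∑ i : Fin 3, ∑ j : Fin 3, (F i j) ^ 2

/-- Frobenius inner product. -/
def ip (F G : M3) : ℝ := ∑ i : Fin 3, ∑ j : Fin 3, F i j * G i j

lemma S2_nonneg (F : M3) : 0 ≤ S2 F :=
  Finset.sum_nonneg fun _ _ => Finset.sum_nonneg fun _ _ => sq_nonneg _

lemma fnorm3_def' (F : M3) : fnorm3 F = Real.sqrt (S2 F) := rfl

lemma fnorm3_nonneg (F : M3) : 0 ≤ fnorm3 F := Real.sqrt_nonneg _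

lemma fnorm3_sq (F : M3) : fnorm3 F ^ 2 = S2 F := Real.sq_sqrt (S2_nonneg F)

lemma S2_smul (t : ℝ) (F : M3) : S2 (t • F) = t ^ 2 * S2 F := by
  simp only [S2, Matrix.smul_apply, smul_eq_mul, mul_pow, Finset.mul_sum]

lemma fnorm3_smul {t : ℝ} (ht : 0 ≤ t) (F : M3) : fnorm3 (t • F) = t * fnorm3 F := by
  rw [fnorm3_def', fnorm3_def', S2_smul, Real.sqrt_mul (sq_nonneg t), Real.sqrt_sq ht]

lemma continuous_fnorm3 : Continuous fnorm3 := by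
  apply Real.continuous_sqrt.comp
  apply continuous_finset_sum; intro i _
  apply continuous_finset_sum; intro j _
  exact (continuous_id.matrix_elem i j).pow 2

lemma ip_sq_le (F G : M3) : (ip F G) ^ 2 ≤ S2 F * S2 G := by
  have h := Finset.sum_mul_sq_le_sq_mul_sq Finset.univ
    (fun p : Fin 3 × Fin 3 => F p.1 p.2) (fun p => G p.1 p.2)
  simpa [ip, S2, Fintype.sum_prod_type] using h

lemma ip_abs_le (F G : M3) : |ip F G| ≤ fnorm3 F * fnorm3 G := by
  have h := ip_sq_le F G
  rw [show |ip F G| = Real.sqrt ((ip F G) ^ 2) from (Real.sqrt_sq_eq_abs _).symm,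
    fnorm3_def', fnorm3_def', ← Real.sqrt_mul (S2_nonneg F)]
  exact Real.sqrt_le_sqrt h

lemma S2_mul_transpose_le (B : M3) : S2 (B * B.transpose) ≤ S2 B ^ 2 := by
  have h1 : ∀ i j : Fin 3, ((B * B.transpose) i j) ^ 2
      ≤ (∑ k : Fin 3, (B i k) ^ 2) * (∑ k : Fin 3, (B j k) ^ 2) := by
    intro i j
    rw [Matrix.mul_apply]
    simp only [Matrix.transpose_apply]
    exact Finset.sum_mul_sq_le_sq_mul_sq _ _ _
  calc S2 (B * B.transpose)
      ≤ ∑ i : Fin 3, ∑ j : Fin 3, (∑ k : Fin 3, (B i k) ^ 2) * (∑ k : Fin 3, (B j k) ^ 2) :=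
        Finset.sum_le_sum fun i _ => Finset.sum_le_sum fun j _ => h1 i j
    _ = S2 B * S2 B := by rw [S2, ← Finset.sum_mul_sum]
    _ = S2 B ^ 2 := (sq (S2 B)).symm

lemma S2_sub_expand (X Y : M3) : S2 (X - Y) = S2 X - 2 * ip X Y + S2 Y := by
  have h : ∀ i j : Fin 3, ((X - Y) i j) ^ 2
      = (X i j) ^ 2 - 2 * (X i j * Y i j) + (Y i j) ^ 2 := by
    intro i j; rw [Matrix.sub_apply]; ring
  simp only [S2, ip, h, Finset.sum_add_distrib, Finset.sum_sub_distrib, ← Finset.mul_sum]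

lemma ip_smul_left (t : ℝ) (X Y : M3) : ip (t • X) Y = t * ip X Y := by
  simp only [ip, Matrix.smul_apply, smul_eq_mul, Finset.mul_sum, mul_assoc]

lemma ip_add_right (F X Y : M3) : ip F (X + Y) = ip F X + ip F Y := by
  simp only [ip, Matrix.add_apply, mul_add, Finset.sum_add_distrib]

lemma ip_neg_right (F X : M3) : ip F (-X) = -ip F X := by
  simp only [ip, Matrix.neg_apply, mul_neg, Finset.sum_neg_distrib]

lemma ip_transpose (F B : M3) (hF : F.IsSymm) : ip F B = ip F B.transpose := by
  simp only [ip, Matrix.transpose_apply]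
  rw [Finset.sum_comm]
  exact Finset.sum_congr rfl fun i _ => Finset.sum_congr rfl fun j _ => by
    rw [hF.apply i j]

lemma one_mem_SO3 : (1 : M3) ∈ SO3 := by
  constructor
  · rw [Matrix.transpose_one, one_mul]
  · exact Matrix.det_one

lemma fnorm3_pos {F : M3} (hF : F ≠ 0) : 0 < fnorm3 F := by
  rcases eq_or_lt_of_le (fnorm3_nonneg F) with h0 | h0
  · exfalso
    apply hF
    have hS : S2 F = 0 := by
      have := fnorm3_sq F
      rw [← h0] at this
      simpa using this.symm
    ext i j
    have h1 : ∀ i ∈ Finset.univ, (0:ℝ) ≤ ∑ j : Fin 3, (F i j) ^ 2 :=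
      fun _ _ => Finset.sum_nonneg fun _ _ => sq_nonneg _
    have h2 := (Finset.sum_eq_zero_iff_of_nonneg h1).mp hS i (Finset.mem_univ i)
    have h3 := (Finset.sum_eq_zero_iff_of_nonneg (fun _ _ => sq_nonneg _)).mp h2 j
      (Finset.mem_univ j)
    exact pow_eq_zero_iff (n := 2) (by norm_num) |>.mp h3
  · exact h0

lemma dist_lower (F : M3) (hF : F.IsSymm) {t : ℝ} (ht : 0 ≤ t)
    (htF : t * fnorm3 F ≤ 1) : t * fnorm3 F ≤ distSO3 (1 + t • F) := by
  rw [distSO3]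
  refine le_csInf ⟨_, ⟨1, one_mem_SO3, rfl⟩⟩ ?_
  rintro x ⟨R, hR, rfl⟩
  show t * fnorm3 F ≤ fnorm3 (1 + t • F - R)
  set B : M3 := R - 1 with hB
  clear_value B
  have hM : (1 : M3) + t • F - R = t • F - B := by rw [hB]; abel
  rw [hM]
  have hkey : B + B.transpose = -(B * B.transpose) := by
    have h1 : (B + 1) * (B.transpose + 1) = 1 := by
      rw [hB, Matrix.transpose_sub, Matrix.transpose_one]
      simpa using hR.1
    have h2 : (B + B.transpose) + B * B.transpose + 1 = (B + 1) * (B.transpose + 1) := by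
      noncomm_ring
    rw [h1] at h2
    have h3 : (B + B.transpose) + B * B.transpose = 0 := by
      have := congrArg (fun X => X - 1) h2
      simpa using this
    exact eq_neg_of_add_eq_zero_left h3
  have e1 : S2 (t • F - B) = S2 (t • F) - 2 * ip (t • F) B + S2 B := S2_sub_expand _ _
  have e2 : ip (t • F) B = t * ip F B := ip_smul_left t F B
  have e3 : 2 * ip F B = -ip F (B * B.transpose) := by
    have ht1 := ip_transpose F B hF
    have h4 : ip F (B + B.transpose) = ip F (-(B * B.transpose)) := by rw [hkey]
    rw [ip_add_right, ip_neg_right] at h4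
    linarith
  have e4 : |ip F (B * B.transpose)| ≤ fnorm3 F * S2 B := by
    calc |ip F (B * B.transpose)| ≤ fnorm3 F * fnorm3 (B * B.transpose) := ip_abs_le _ _
      _ ≤ fnorm3 F * S2 B := by
          have hs := Real.sqrt_le_sqrt (S2_mul_transpose_le B)
          rw [Real.sqrt_sq (S2_nonneg B)] at hs
          rw [fnorm3_def']
          exact mul_le_mul_of_nonneg_left hs (fnorm3_nonneg F)
  have e5 : t ^ 2 * S2 F ≤ S2 (t • F - B) := by
    rw [e1, e2, S2_smul]
    have e4' := (abs_le.mp e4).1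
    have hf0 := fnorm3_nonneg F
    have hSB := S2_nonneg B
    have hf2 : fnorm3 F * fnorm3 F = S2 F := by rw [← fnorm3_sq]; ring
    nlinarith [e3, e4', htF, ht]
  have := Real.sqrt_le_sqrt e5
  rwa [Real.sqrt_mul (sq_nonneg t), Real.sqrt_sq ht, ← fnorm3_def', ← fnorm3_def'] at this

lemma qf_continuous (Q : QuadraticForm ℝ M3) : Continuous fun x : M3 => Q x := by
  have hrep : ∀ x : M3, Q x = (1 / 2 : ℝ) * ∑ i : Fin 3, ∑ j : Fin 3,
      x i j * ((QuadraticMap.polarBilin Q).flip (Matrix.single i j 1) x) := by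
    intro x
    have hxx : QuadraticMap.polarBilin Q x x = Q x + Q x := by
      rw [QuadraticMap.polarBilin_apply_apply, QuadraticMap.polar_self, two_nsmul]
    have hbasis : x = ∑ i : Fin 3, ∑ j : Fin 3, (x i j) • Matrix.single i j (1:ℝ) := by
      conv_lhs => rw [Matrix.matrix_eq_sum_single x]
      refine Finset.sum_congr rfl fun i _ => Finset.sum_congr rfl fun j _ => ?_
      rw [Matrix.smul_single, smul_eq_mul, mul_one]
    have hexp : QuadraticMap.polarBilin Q x x = ∑ i : Fin 3, ∑ j : Fin 3,
        x i j * ((QuadraticMap.polarBilin Q).flip (Matrix.single i j 1) x) := by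
      have h3 : QuadraticMap.polarBilin Q x x
          = QuadraticMap.polarBilin Q x
            (∑ i : Fin 3, ∑ j : Fin 3, (x i j) • Matrix.single i j (1:ℝ)) :=
        congrArg (fun y => QuadraticMap.polarBilin Q x y) hbasis
      rw [h3, map_sum]
      refine Finset.sum_congr rfl fun i _ => ?_
      rw [map_sum]
      refine Finset.sum_congr rfl fun j _ => ?_
      rw [map_smul, smul_eq_mul, LinearMap.flip_apply]
    rw [hexp] at hxx
    linarith [hxx]
  have heq : (fun x : M3 => Q x) = fun x => (1 / 2 : ℝ) * ∑ i : Fin 3, ∑ j : Fin 3,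
      x i j * ((QuadraticMap.polarBilin Q).flip (Matrix.single i j 1) x) :=
    funext hrep
  rw [heq]
  apply Continuous.mul continuous_const
  apply continuous_finset_sum; intro i _
  apply continuous_finset_sum; intro j _
  exact (continuous_id.matrix_elem i j).mul
    ((QuadraticMap.polarBilin Q).flip (Matrix.single i j 1)).continuous_of_finiteDimensional

set_option maxHeartbeats 1000000 in
/-- properties of the quadratic form `Q₃` obtained from the expansion of a
frame-indifferent, nondegenerate elastic energy density `W` around the identity. -/
theorem stmt0
    (W : M3 → ℝ) (c : ℝ) (hc : 0 < c)
    (hWnonneg : ∀ F, 0 ≤ W F)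
    (hWzero : ∀ R ∈ SO3, W R = 0)
    (hWframe : ∀ R ∈ SO3, ∀ F : M3, W (R * F) = W F)
    (hWnd : ∀ F : M3, c * (distSO3 F) ^ 2 ≤ W F)
    (Q : QuadraticForm ℝ M3)
    (ω : ℝ → ℝ≥0∞)
    (hωmono : MonotoneOn ω (Set.Ici 0))
    (hωlim : Filter.Tendsto ω (nhdsWithin 0 (Set.Ioi 0)) (nhds 0))
    (hQ : ∀ F : M3,
      ENNReal.ofReal |W (1 + F) - Q F| ≤ ω (fnorm3 F) * ENNReal.ofReal ((fnorm3 F) ^ 2)) :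
    (∀ F : M3, 0 ≤ Q F) ∧
    (∀ F : M3, Q F = Q (symm3 F)) ∧
    (∀ F : M3, F.IsSymm → c / 2 * (fnorm3 F) ^ 2 ≤ Q F) ∧
    (∀ F : M3, F.IsSymm → F ≠ 0 → 0 < Q F) := by
  -- the key quantitative Taylor estimate
  have key : ∀ ε : ℝ, 0 < ε → ∃ δ : ℝ, 0 < δ ∧
      ∀ G : M3, fnorm3 G ≤ δ → |W (1 + G) - Q G| ≤ ε * fnorm3 G ^ 2 := by
    intro ε hε
    have h := ENNReal.tendsto_nhds_zero.mp hωlim (ENNReal.ofReal ε)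
      (ENNReal.ofReal_pos.mpr hε)
    rw [eventually_nhdsWithin_iff] at h
    obtain ⟨δ, hδ, hball⟩ := Metric.eventually_nhds_iff.mp h
    refine ⟨δ / 2, by positivity, fun G hG => ?_⟩
    have hω : ω (fnorm3 G) ≤ ENNReal.ofReal ε := by
      rcases eq_or_lt_of_le (fnorm3_nonneg G) with h0 | h0
      · have h2 : ω (δ / 2) ≤ ENNReal.ofReal ε := by
          apply hball
          · rw [Real.dist_eq, sub_zero, abs_of_nonneg (by positivity)]; linarith
          · exact Set.mem_Ioi.mpr (by positivity)
        calc ω (fnorm3 G) = ω 0 := by rw [← h0]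
          _ ≤ ω (δ / 2) := hωmono (Set.mem_Ici.mpr le_rfl)
              (Set.mem_Ici.mpr (by positivity)) (by positivity)
          _ ≤ ENNReal.ofReal ε := h2
      · apply hball
        · rw [Real.dist_eq, sub_zero, abs_of_nonneg (fnorm3_nonneg G)]; linarith
        · exact Set.mem_Ioi.mpr h0
    have h5 : ω (fnorm3 G) * ENNReal.ofReal (fnorm3 G ^ 2)
        ≤ ENNReal.ofReal (ε * fnorm3 G ^ 2) := by
      rw [ENNReal.ofReal_mul hε.le]
      exact mul_le_mul_left hω _
    have h6 := le_trans (hQ G) h5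
    rwa [ENNReal.ofReal_le_ofReal_iff (by positivity)] at h6
  -- part (a)
  have parta : ∀ F : M3, 0 ≤ Q F := by
    intro F
    have hK : ∀ ε : ℝ, 0 < ε → -(ε * (fnorm3 F ^ 2 + 1)) ≤ Q F := by
      intro ε hε
      obtain ⟨δ, hδ, hkey⟩ := key ε hε
      have hf0 := fnorm3_nonneg F
      set t := δ / (fnorm3 F + 1) with htdef
      have htpos : 0 < t := by positivity
      have hle : fnorm3 (t • F) ≤ δ := by
        rw [fnorm3_smul htpos.le, htdef, div_mul_eq_mul_div, div_le_iff₀ (by positivity)]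
        nlinarith
      have h1 := hkey _ hle
      rw [fnorm3_smul htpos.le] at h1
      have h3 := (abs_le.mp h1).2
      have hW := hWnonneg (1 + t • F)
      have hQs : Q (t • F) = (t * t) * Q F := by
        rw [QuadraticMap.map_smul, smul_eq_mul]
      have h4 : (t ^ 2) * (-(ε * (fnorm3 F ^ 2 + 1))) ≤ (t ^ 2) * Q F := by nlinarith
      exact le_of_mul_le_mul_left h4 (pow_pos htpos 2)
    by_contra hcon
    push_neg at hcon
    have hf0 := fnorm3_nonneg F
    have hε : 0 < -Q F / (2 * (fnorm3 F ^ 2 + 1)) := by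
      have : 0 < -Q F := neg_pos.mpr hcon
      positivity
    have h := hK _ hε
    have hne : (0:ℝ) < fnorm3 F ^ 2 + 1 := by positivity
    have heq : -Q F / (2 * (fnorm3 F ^ 2 + 1)) * (fnorm3 F ^ 2 + 1) = -Q F / 2 := by
      field_simp
    rw [heq] at h
    linarith
  -- part (c), strong form
  have partc : ∀ F : M3, F.IsSymm → c * fnorm3 F ^ 2 ≤ Q F := by
    intro F hF
    have hf0 := fnorm3_nonneg F
    have hstep : ∀ ε : ℝ, 0 < ε → (c - ε) * fnorm3 F ^ 2 ≤ Q F := by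
      intro ε hε
      obtain ⟨δ, hδ, hkey⟩ := key ε hε
      have hmin : 0 < min δ 1 := lt_min hδ one_pos
      set t := min δ 1 / (fnorm3 F + 1) with htdef
      have htpos : 0 < t := by positivity
      have ht1 : t * fnorm3 F ≤ 1 := by
        rw [htdef, div_mul_eq_mul_div, div_le_one (by positivity)]
        calc min δ 1 * fnorm3 F ≤ 1 * fnorm3 F :=
          mul_le_mul_of_nonneg_right (min_le_right _ _) hf0
          _ ≤ fnorm3 F + 1 := by linarith
      have htδ : t * fnorm3 F ≤ δ := by
        rw [htdef]
        calc min δ 1 / (fnorm3 F + 1) * fnorm3 F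
            = min δ 1 * (fnorm3 F / (fnorm3 F + 1)) := by ring
          _ ≤ δ * 1 := by
              apply mul_le_mul (min_le_left _ _) _ (by positivity) hδ.le
              rw [div_le_one (by positivity)]; linarith
          _ = δ := mul_one δ
      have hdist := dist_lower F hF htpos.le ht1
      have hWlow := hWnd (1 + t • F)
      have hsq : (t * fnorm3 F) ^ 2 ≤ distSO3 (1 + t • F) ^ 2 :=
        pow_le_pow_left₀ (by positivity) hdist 2
      have h1 := hkey (t • F) (by rw [fnorm3_smul htpos.le]; exact htδ)
      rw [fnorm3_smul htpos.le] at h1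
      have h2 := (abs_le.mp h1).2
      have hQs : Q (t • F) = (t * t) * Q F := by
        rw [QuadraticMap.map_smul, smul_eq_mul]
      have hcd : c * (t * fnorm3 F) ^ 2 ≤ c * distSO3 (1 + t • F) ^ 2 :=
        mul_le_mul_of_nonneg_left hsq hc.le
      have hdiv : t ^ 2 * ((c - ε) * fnorm3 F ^ 2) ≤ t ^ 2 * Q F := by nlinarith
      exact le_of_mul_le_mul_left hdiv (pow_pos htpos 2)
    apply le_of_forall_sub_le
    intro ε hε
    rcases eq_or_lt_of_le hf0 with h0 | h0
    · have : c * fnorm3 F ^ 2 = 0 := by rw [← h0]; ring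
      rw [this]
      linarith [parta F]
    · have h := hstep (ε / fnorm3 F ^ 2) (by positivity)
      have heq2 : (ε / fnorm3 F ^ 2) * fnorm3 F ^ 2 = ε := by
        field_simp
      have hexpand : (c - ε / fnorm3 F ^ 2) * fnorm3 F ^ 2
          = c * fnorm3 F ^ 2 - (ε / fnorm3 F ^ 2) * fnorm3 F ^ 2 := by ring
      rw [hexpand, heq2] at h
      linarith
  -- part (b)
  have partb : ∀ F : M3, Q F = Q (symm3 F) := by
    intro F
    set S : M3 := symm3 F with hS
    set A : M3 := F - S with hA
    have hFSA : S + A = F := by rw [hA]; abel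
    have hsymm3 : S = (1 / 2 : ℝ) • (F + F.transpose) := hS
    have hStrans : S.transpose = S := by
      rw [hsymm3, Matrix.transpose_smul, Matrix.transpose_add, Matrix.transpose_transpose,
        add_comm]
    have h2s : F + F.transpose = S + S := by
      rw [hsymm3]; module
    have hAskew : A.transpose = -A := by
      rw [hA, Matrix.transpose_sub, hStrans]
      have hFt : F.transpose = S + S - F := by rw [← h2s]; abel
      rw [hFt]; abel
    -- Cayley transform machinery
    set N : ℝ → M3 := fun t => 1 - (t / 2) • A with hNdef
    set P : ℝ → M3 := fun t => 1 + (t / 2) • A with hPdef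
    set C : ℝ → M3 := fun t => P t * (N t)⁻¹ with hCdef
    have hNa : ∀ t : ℝ, N t = 1 - (t / 2) • A := fun t => rfl
    have hPa : ∀ t : ℝ, P t = 1 + (t / 2) • A := fun t => rfl
    have hCa : ∀ t : ℝ, C t = P t * (N t)⁻¹ := fun t => rfl
    have hNPcomm : ∀ t : ℝ, N t * P t = P t * N t := by
      intro t
      rw [hNa, hPa]
      set X : M3 := (t / 2) • A with hX
      clear_value X
      noncomm_ring
    have hPN : ∀ t : ℝ, (N t).transpose = P t := by
      intro t
      rw [hNa, hPa, Matrix.transpose_sub, Matrix.transpose_one, Matrix.transpose_smul, hAskew,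
        smul_neg, sub_neg_eq_add]
    have hPt : ∀ t : ℝ, (P t).transpose = N t := by
      intro t
      rw [← hPN, Matrix.transpose_transpose]
    have hdetP : ∀ t : ℝ, (P t).det = (N t).det := by
      intro t
      rw [← hPN, Matrix.det_transpose]
    -- continuity
    have hNcont : Continuous N := by
      rw [hNdef]
      exact continuous_const.sub ((continuous_id.div_const 2).smul continuous_const)
    have hPcont : Continuous P := by
      rw [hPdef]
      exact continuous_const.add ((continuous_id.div_const 2).smul continuous_const)
    have hN0 : N 0 = 1 := by rw [hNa]; norm_num
    have hP0 : P 0 = 1 := by rw [hPa]; norm_num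
    have hdtend : Filter.Tendsto (fun t => (N t).det) (nhds 0) (nhds 1) := by
      have := (hNcont.matrix_det).tendsto 0
      rwa [hN0, Matrix.det_one] at this
    have hdne : ∀ᶠ t in nhdsWithin (0:ℝ) (Set.Ioi 0), (N t).det ≠ 0 :=
      (hdtend.eventually_ne one_ne_zero).filter_mono nhdsWithin_le_nhds
    have hinv : ∀ t : ℝ, (N t)⁻¹ = ((N t).det)⁻¹ • (N t).adjugate := by
      intro t
      rw [Matrix.inv_def, Ring.inverse_eq_inv']
    have hCtend : Filter.Tendsto C (nhdsWithin (0:ℝ) (Set.Ioi 0)) (nhds 1) := by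
      have t2 : Filter.Tendsto (fun t => ((N t).det)⁻¹) (nhds 0) (nhds 1) := by
        simpa using hdtend.inv₀ one_ne_zero
      have t3 : Filter.Tendsto (fun t => (N t).adjugate) (nhds 0) (nhds 1) := by
        have := (hNcont.matrix_adjugate).tendsto 0
        rwa [hN0, Matrix.adjugate_one] at this
      have t4 : Filter.Tendsto (fun t => ((N t).det)⁻¹ • (N t).adjugate) (nhds 0)
          (nhds ((1:ℝ) • (1:M3))) := t2.smul t3
      have t5 : Filter.Tendsto P (nhds 0) (nhds 1) := by
        have := hPcont.tendsto 0
        rwa [hP0] at this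
      have t6 : Filter.Tendsto (fun t => P t * (((N t).det)⁻¹ • (N t).adjugate)) (nhds 0)
          (nhds ((1:M3) * ((1:ℝ) • (1:M3)))) := t5.mul t4
      have hCeq : C = fun t => P t * (((N t).det)⁻¹ • (N t).adjugate) :=
        funext fun t => by rw [hCa, hinv]
      rw [hCeq]
      have : ((1:M3) * ((1:ℝ) • (1:M3))) = (1:M3) := by simp
      rw [this] at t6
      exact t6.mono_left nhdsWithin_le_nhds
    -- SO3 membership
    have hCSO3 : ∀ᶠ t in nhdsWithin (0:ℝ) (Set.Ioi 0), C t ∈ SO3 := by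
      filter_upwards [hdne] with t hdt
      have hunit : IsUnit (N t).det := isUnit_iff_ne_zero.mpr hdt
      have hPunit : IsUnit (P t).det := by rw [hdetP]; exact hunit
      constructor
      · have hCt : (C t).transpose = (P t)⁻¹ * N t := by
          rw [hCa, Matrix.transpose_mul, Matrix.transpose_nonsing_inv, hPN, hPt]
        rw [hCt, hCa]
        have hcomm2 : (N t)⁻¹ * (P t)⁻¹ = (P t)⁻¹ * (N t)⁻¹ := by
          rw [← Matrix.mul_inv_rev, ← Matrix.mul_inv_rev, hNPcomm]
        calc P t * (N t)⁻¹ * ((P t)⁻¹ * N t)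
            = P t * ((N t)⁻¹ * (P t)⁻¹) * N t := by noncomm_ring
          _ = P t * ((P t)⁻¹ * (N t)⁻¹) * N t := by rw [hcomm2]
          _ = (P t * (P t)⁻¹) * ((N t)⁻¹ * N t) := by noncomm_ring
          _ = 1 := by
              rw [Matrix.mul_nonsing_inv _ hPunit, Matrix.nonsing_inv_mul _ hunit, one_mul]
      · show (C t).det = 1
        rw [hCa, Matrix.det_mul, Matrix.det_nonsing_inv, hdetP, Ring.inverse_eq_inv']
        exact mul_inv_cancel₀ hdt
    -- the curve H
    set Hf : ℝ → M3 := fun t => (1/2 : ℝ) • A + (1/2 : ℝ) • (A * C t) + C t * S with hHdef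
    have hHa : ∀ t : ℝ, Hf t = (1/2 : ℝ) • A + (1/2 : ℝ) • (A * C t) + C t * S := fun t => rfl
    have hHtend : Filter.Tendsto Hf (nhdsWithin (0:ℝ) (Set.Ioi 0)) (nhds F) := by
      have mAC : Filter.Tendsto (fun t => A * C t) (nhdsWithin (0:ℝ) (Set.Ioi 0))
          (nhds (A * 1)) := tendsto_const_nhds.mul hCtend
      have mCS : Filter.Tendsto (fun t => C t * S) (nhdsWithin (0:ℝ) (Set.Ioi 0))
          (nhds ((1:M3) * S)) := hCtend.mul tendsto_const_nhds
      have hsum : Filter.Tendsto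
          (fun t => (1/2 : ℝ) • A + (1/2 : ℝ) • (A * C t) + C t * S)
          (nhdsWithin (0:ℝ) (Set.Ioi 0))
          (nhds ((1/2 : ℝ) • A + (1/2 : ℝ) • (A * 1) + (1:M3) * S)) :=
        (tendsto_const_nhds.add (mAC.const_smul (1/2 : ℝ))).add mCS
      have hval : (1/2 : ℝ) • A + (1/2 : ℝ) • (A * 1) + (1:M3) * S = F := by
        rw [mul_one, one_mul, ← hFSA]; module
      rw [hHdef]
      rwa [hval] at hsum
    -- key identity
    have hident : ∀ᶠ t in nhdsWithin (0:ℝ) (Set.Ioi 0),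
        (1 : M3) + t • Hf t = C t * (1 + t • S) := by
      filter_upwards [hdne] with t hdt
      have hunit : IsUnit (N t).det := isUnit_iff_ne_zero.mpr hdt
      have hNinv : N t * (N t)⁻¹ = 1 := Matrix.mul_nonsing_inv _ hunit
      have hNmul : N t * C t = P t := by
        rw [hCa, ← mul_assoc, hNPcomm, mul_assoc, hNinv, mul_one]
      have hcancel : ∀ X Y : M3, N t * X = N t * Y → X = Y := by
        intro X Y hxy
        have h := congrArg (fun Z => (N t)⁻¹ * Z) hxy
        simpa [← mul_assoc, Matrix.nonsing_inv_mul _ hunit] using h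
      have hNX : N t * ((t/2 : ℝ) • A) = ((t/2 : ℝ) • A) * N t := by
        rw [hNa]
        set X : M3 := (t / 2) • A with hX
        clear_value X
        noncomm_ring
      have e2 : C t = 1 + (t/2 : ℝ) • A + ((t/2 : ℝ) • A) * C t := by
        apply hcancel
        rw [hNmul]
        calc P t = N t + N t * ((t/2 : ℝ) • A) + ((t/2 : ℝ) • A) * P t := by
              rw [hNa, hPa]
              set X : M3 := (t / 2) • A with hX
              clear_value X
              noncomm_ring
          _ = N t + N t * ((t/2 : ℝ) • A) + ((t/2 : ℝ) • A) * (N t * C t) := by rw [hNmul]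
          _ = N t + N t * ((t/2 : ℝ) • A) + (((t/2 : ℝ) • A) * N t) * C t := by
              rw [mul_assoc]
          _ = N t + N t * ((t/2 : ℝ) • A) + (N t * ((t/2 : ℝ) • A)) * C t := by rw [hNX]
          _ = N t * (1 + (t/2 : ℝ) • A + ((t/2 : ℝ) • A) * C t) := by noncomm_ring
      have hXC : ((t/2 : ℝ) • A) * C t = (t/2 : ℝ) • (A * C t) := smul_mul_assoc _ _ _
      have hR : C t * (1 + t • S) = C t + t • (C t * S) := by
        rw [mul_add, mul_one, mul_smul_comm]
      have e2' : (1 : M3) + (t/2 : ℝ) • A + (t/2 : ℝ) • (A * C t) = C t := by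
        rw [← hXC]; exact e2.symm
      calc (1 : M3) + t • Hf t
          = 1 + (t/2 : ℝ) • A + (t/2 : ℝ) • (A * C t) + t • (C t * S) := by
            rw [hHa]; module
        _ = C t + t • (C t * S) := by rw [e2']
        _ = C t * (1 + t • S) := hR.symm
    -- epsilon argument
    have hfn_tend : Filter.Tendsto (fun t => fnorm3 (Hf t)) (nhdsWithin (0:ℝ) (Set.Ioi 0))
        (nhds (fnorm3 F)) := (continuous_fnorm3.tendsto F).comp hHtend
    have hL0 : (0:ℝ) ≤ fnorm3 F := fnorm3_nonneg F
    have hSnn : (0:ℝ) ≤ fnorm3 S := fnorm3_nonneg S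
    have habs : ∀ ε : ℝ, 0 < ε →
        |Q F - Q S| ≤ ε * ((fnorm3 F + 1)^2 + fnorm3 S^2) := by
      intro ε hε
      obtain ⟨δ, hδ, hkey⟩ := key ε hε
      have hb1 : ∀ᶠ t in nhdsWithin (0:ℝ) (Set.Ioi 0), fnorm3 (Hf t) ≤ fnorm3 F + 1 :=
        hfn_tend.eventually ((eventually_lt_nhds (lt_add_one (fnorm3 F))).mono
          fun x hx => hx.le)
      have hmpos : 0 < min (δ/(fnorm3 F + 2)) (δ/(fnorm3 S + 1)) :=
        lt_min (div_pos hδ (by linarith)) (div_pos hδ (by linarith))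
      have hb2 : ∀ᶠ t in nhdsWithin (0:ℝ) (Set.Ioi 0),
          t < min (δ/(fnorm3 F + 2)) (δ/(fnorm3 S + 1)) :=
        eventually_nhdsWithin_of_eventually_nhds (eventually_lt_nhds hmpos)
      have hev : ∀ᶠ t in nhdsWithin (0:ℝ) (Set.Ioi 0),
          |Q (Hf t) - Q S| ≤ ε * ((fnorm3 F + 1)^2 + fnorm3 S^2) := by
        filter_upwards [hident, hCSO3, hb1, hb2, self_mem_nhdsWithin]
          with t hid hSO hb hlt ht0
        have htpos : (0:ℝ) < t := ht0
        have hmin1 : t < δ/(fnorm3 F + 2) := lt_of_lt_of_le hlt (min_le_left _ _)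
        have hmin2 : t < δ/(fnorm3 S + 1) := lt_of_lt_of_le hlt (min_le_right _ _)
        have hHd : fnorm3 (t • Hf t) ≤ δ := by
          rw [fnorm3_smul htpos.le]
          have h1 : t * fnorm3 (Hf t) ≤ t * (fnorm3 F + 1) :=
            mul_le_mul_of_nonneg_left hb htpos.le
          have h2 : t * (fnorm3 F + 2) < δ := (lt_div_iff₀ (by linarith)).mp hmin1
          nlinarith [fnorm3_nonneg (Hf t)]
        have hSd : fnorm3 (t • S) ≤ δ := by
          rw [fnorm3_smul htpos.le]
          have h2 : t * (fnorm3 S + 1) < δ := (lt_div_iff₀ (by linarith)).mp hmin2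
          nlinarith
        have k1 := hkey _ hHd
        have k2 := hkey _ hSd
        rw [fnorm3_smul htpos.le] at k1 k2
        have hWeq : W (1 + t • Hf t) = W (1 + t • S) := by
          rw [hid]; exact hWframe _ hSO _
        have hQH : Q (t • Hf t) = (t*t) * Q (Hf t) := by
          rw [QuadraticMap.map_smul, smul_eq_mul]
        have hQS2 : Q (t • S) = (t*t) * Q S := by
          rw [QuadraticMap.map_smul, smul_eq_mul]
        rw [hQH, hWeq] at k1
        rw [hQS2] at k2
        have habs2 : |(t*t) * Q (Hf t) - (t*t) * Q S|
            ≤ ε * (t * fnorm3 (Hf t))^2 + ε * (t * fnorm3 S)^2 :=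
          (abs_sub_le _ (W (1 + t • S)) _).trans
            (add_le_add (by rwa [abs_sub_comm] at k1) k2)
        have hfac : |(t*t) * Q (Hf t) - (t*t) * Q S| = (t*t) * |Q (Hf t) - Q S| := by
          rw [← mul_sub, abs_mul, abs_of_pos (mul_pos htpos htpos)]
        rw [hfac] at habs2
        have hb0 : 0 ≤ fnorm3 (Hf t) := fnorm3_nonneg _
        have hrhs : ε * (t * fnorm3 (Hf t))^2 + ε * (t * fnorm3 S)^2
            ≤ (t*t) * (ε * ((fnorm3 F + 1)^2 + fnorm3 S^2)) := by
          have hsq2 : fnorm3 (Hf t)^2 ≤ (fnorm3 F + 1)^2 := pow_le_pow_left₀ hb0 hb 2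
          have h3 : ε * (t*t) * (fnorm3 (Hf t)^2) ≤ ε * (t*t) * ((fnorm3 F + 1)^2) :=
            mul_le_mul_of_nonneg_left hsq2 (by positivity)
          nlinarith [h3]
        exact le_of_mul_le_mul_left (habs2.trans hrhs) (mul_pos htpos htpos)
      have hlim : Filter.Tendsto (fun t => |Q (Hf t) - Q S|)
          (nhdsWithin (0:ℝ) (Set.Ioi 0)) (nhds |Q F - Q S|) := by
        have h1 : Filter.Tendsto (fun t => Q (Hf t)) (nhdsWithin (0:ℝ) (Set.Ioi 0))
            (nhds (Q F)) := ((qf_continuous Q).tendsto F).comp hHtend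
        exact (h1.sub tendsto_const_nhds).abs
      exact le_of_tendsto hlim hev
    have hK0 : (0:ℝ) < (fnorm3 F + 1)^2 + fnorm3 S^2 := by nlinarith
    have habs0 : |Q F - Q S| ≤ 0 := by
      by_contra hpos
      push_neg at hpos
      have h := habs (|Q F - Q S| / (2 * ((fnorm3 F + 1)^2 + fnorm3 S^2))) (by positivity)
      rw [div_mul_eq_mul_div] at h
      have heq : |Q F - Q S| * ((fnorm3 F + 1)^2 + fnorm3 S^2)
          / (2 * ((fnorm3 F + 1)^2 + fnorm3 S^2)) = |Q F - Q S| / 2 := by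
        field_simp
      rw [heq] at h
      linarith
    exact sub_eq_zero.mp (abs_nonpos_iff.mp habs0)
  refine ⟨parta, partb, ?_, ?_⟩
  · intro F hF
    have := partc F hF
    have hf0 := fnorm3_nonneg F
    nlinarith
  · intro F hF hne
    have h1 := partc F hF
    have h2 := fnorm3_pos hne
    have h3 : 0 < c * fnorm3 F ^ 2 := mul_pos hc (pow_pos h2 2)
    linarith
end
end

section
/- Let Ω ⊂ ℝ² be open, bounded and simply connected, and let v : Ω → ℝ be smooth with Δv = 0 on Ω and with f := det∇²v satisfying f ≤ c₀ < 0 on Ω. Then Δ(log(−f)) = 0 on Ω. -/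
/-!
For harmonic `v`, the function `F = ∂₀∂₁v + i ∂₀∂₀v` satisfies the Cauchy–Riemann equations
(symmetry of third derivatives plus `∂₁∂₁v = -∂₀∂₀v`), and `-det ∇²v = |F|²`, which does not
vanish. So `log (-det ∇²v) = log |F|²` is the logarithm of the squared modulus of a nonvanishing
holomorphic function, hence harmonic; this last fact is checked by differentiating directly.
-/

noncomputable section

open Real

/-- The plane ℝ². -/
abbrev E2 : Type := EuclideanSpace ℝ (Fin 2)

/-- Partial derivative in the `i`-th coordinate direction. -/
def pd (i : Fin 2) (f : E2 → ℝ) (x : E2) : ℝ :=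
  fderiv ℝ f x (EuclideanSpace.single i 1)

/-- Hessian of a scalar function on ℝ². -/
def hess (f : E2 → ℝ) (x : E2) : Fin 2 → Fin 2 → ℝ :=
  fun i j => pd i (pd j f) x

/-- Determinant of the Hessian. -/
def hessDet (f : E2 → ℝ) (x : E2) : ℝ :=
  hess f x 0 0 * hess f x 1 1 - hess f x 0 1 * hess f x 1 0

open Set

def lap (f : E2 → ℝ) (x : E2) : ℝ :=
  pd 0 (pd 0 f) x + pd 1 (pd 1 f) x

section PartialDerivatives

variable {Ω : Set E2} {f g : E2 → ℝ} {x : E2}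

lemma ContDiffOn.pd (hΩ : IsOpen Ω) (hf : ContDiffOn ℝ (⊤ : ℕ∞) f Ω) (i : Fin 2) :
    ContDiffOn ℝ (⊤ : ℕ∞) (pd i f) Ω :=
  (hf.fderiv_of_isOpen hΩ (by decide)).clm_apply contDiffOn_const

lemma ContDiffOn.differentiableAt_of_isOpen {E F : Type*} [NormedAddCommGroup E]
    [NormedSpace ℝ E] [NormedAddCommGroup F] [NormedSpace ℝ F] {s : Set E} {φ : E → F}
    {n : WithTop ℕ∞} {a : E} (hφ : ContDiffOn ℝ n φ s) (hs : IsOpen s) (hn : n ≠ 0) (ha : a ∈ s) :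
    DifferentiableAt ℝ φ a :=
  (hφ.differentiableOn hn).differentiableAt (hs.mem_nhds ha)

lemma pd_congr_of_eqOn (hΩ : IsOpen Ω) (h : EqOn f g Ω) (hx : x ∈ Ω) (i : Fin 2) :
    pd i f x = pd i g x := by
  rw [pd, pd, (Filter.eventuallyEq_of_mem (hΩ.mem_nhds hx) h).fderiv_eq]

lemma lap_congr_of_eqOn (hΩ : IsOpen Ω) (h : EqOn f g Ω) (hx : x ∈ Ω) :
    lap f x = lap g x := by
  have hpd (i : Fin 2) : EqOn (pd i f) (pd i g) Ω := fun y hy => pd_congr_of_eqOn hΩ h hy i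
  rw [lap, lap, pd_congr_of_eqOn hΩ (hpd 0) hx, pd_congr_of_eqOn hΩ (hpd 1) hx]

lemma pd_comm (hΩ : IsOpen Ω) (hf : ContDiffOn ℝ (⊤ : ℕ∞) f Ω) (hx : x ∈ Ω) (i j : Fin 2) :
    pd i (pd j f) x = pd j (pd i f) x := by
  have hsymm : IsSymmSndFDerivAt ℝ f x :=
    (hf.contDiffAt (hΩ.mem_nhds hx)).isSymmSndFDerivAt
      (by simp only [minSmoothness_of_isRCLikeNormedField]; exact WithTop.coe_le_coe.mpr le_top)
  have hdf : DifferentiableAt ℝ (fderiv ℝ f) x :=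
    (hf.fderiv_of_isOpen (m := (⊤ : ℕ∞)) hΩ (by decide)).differentiableAt_of_isOpen hΩ
      (by decide) hx
  have hpd_pd (a b : Fin 2) :
      pd a (pd b f) x = fderiv ℝ (fderiv ℝ f) x (EuclideanSpace.single a 1)
        (EuclideanSpace.single b 1) := by
    change fderiv ℝ (fun y => fderiv ℝ f y (EuclideanSpace.single b 1)) x _ = _
    simp [fderiv_clm_apply hdf (differentiableAt_const _)]
  rw [hpd_pd, hpd_pd, hsymm]

lemma pd_add (hf : DifferentiableAt ℝ f x) (hg : DifferentiableAt ℝ g x) (i : Fin 2) :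
    pd i (fun y => f y + g y) x = pd i f x + pd i g x := by
  simp [pd, fderiv_fun_add hf hg]

lemma pd_neg (i : Fin 2) : pd i (fun y => -f y) x = -pd i f x := by
  simp [pd, fderiv_fun_neg]

lemma pd_mul (hf : DifferentiableAt ℝ f x) (hg : DifferentiableAt ℝ g x) (i : Fin 2) :
    pd i (fun y => f y * g y) x = pd i f x * g x + f x * pd i g x := by
  simp [pd, fderiv_fun_mul hf hg]; ring

lemma pd_log (hf : DifferentiableAt ℝ f x) (hx : f x ≠ 0) (i : Fin 2) :
    pd i (fun y => log (f y)) x = (f x)⁻¹ * pd i f x := by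
  simp [pd, (hf.hasFDerivAt.log hx).fderiv]

lemma pd_inv (hf : DifferentiableAt ℝ f x) (hx : f x ≠ 0) (i : Fin 2) :
    pd i (fun y => (f y)⁻¹) x = -pd i f x / f x ^ 2 := by
  simp [pd, fderiv_fun_comp x (differentiableAt_inv hx) hf, fderiv_inv]; ring

lemma pd_pd_mul (hΩ : IsOpen Ω) (hf : ContDiffOn ℝ (⊤ : ℕ∞) f Ω)
    (hg : ContDiffOn ℝ (⊤ : ℕ∞) g Ω) (hx : x ∈ Ω) (i : Fin 2) :
    pd i (pd i (fun y => f y * g y)) x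
      = pd i (pd i f) x * g x + 2 * (pd i f x * pd i g x) + f x * pd i (pd i g) x := by
  have hd {h : E2 → ℝ} (hh : ContDiffOn ℝ (⊤ : ℕ∞) h Ω) {y : E2} (hy : y ∈ Ω) :
      DifferentiableAt ℝ h y := hh.differentiableAt_of_isOpen hΩ (by decide) hy
  have hf' := hf.pd hΩ i
  have hg' := hg.pd hΩ i
  rw [pd_congr_of_eqOn hΩ (fun y hy => pd_mul (hd hf hy) (hd hg hy) i) hx,
    pd_add ((hd hf' hx).fun_mul (hd hg hx)) ((hd hf hx).fun_mul (hd hg' hx)),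
    pd_mul (hd hf' hx) (hd hg hx), pd_mul (hd hf hx) (hd hg' hx)]
  ring

lemma pd_pd_log (hΩ : IsOpen Ω) (hf : ContDiffOn ℝ (⊤ : ℕ∞) f Ω) (hf0 : ∀ y ∈ Ω, f y ≠ 0)
    (hx : x ∈ Ω) (i : Fin 2) :
    pd i (pd i (fun y => log (f y))) x = pd i (pd i f) x / f x - (pd i f x / f x) ^ 2 := by
  have hd {y : E2} (hy : y ∈ Ω) : DifferentiableAt ℝ f y :=
    hf.differentiableAt_of_isOpen hΩ (by decide) hy
  rw [pd_congr_of_eqOn hΩ (fun y hy => pd_log (hd hy) (hf0 y hy) i) hx,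
    pd_mul ((hd hx).fun_inv (hf0 x hx))
      ((hf.pd hΩ i).differentiableAt_of_isOpen hΩ (by decide) hx),
    pd_inv (hd hx) (hf0 x hx)]
  field_simp
  ring

end PartialDerivatives

/-- The Cauchy–Riemann equations for `a + i b`. -/
def CauchyRiemannOn (a b : E2 → ℝ) (Ω : Set E2) : Prop :=
  EqOn (pd 0 a) (pd 1 b) Ω ∧ EqOn (pd 1 a) (fun y => -pd 0 b y) Ω

namespace CauchyRiemannOn

variable {Ω : Set E2} {a b : E2 → ℝ} {x : E2}

lemma lap_fst_eq_zero (h : CauchyRiemannOn a b Ω) (hΩ : IsOpen Ω)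
    (hb : ContDiffOn ℝ (⊤ : ℕ∞) b Ω) (hx : x ∈ Ω) : lap a x = 0 := by
  obtain ⟨h₀, h₁⟩ := h
  have : pd 1 (pd 1 a) x = -pd 0 (pd 0 a) x := calc
    pd 1 (pd 1 a) x = pd 1 (fun y => -pd 0 b y) x := pd_congr_of_eqOn hΩ h₁ hx 1
    _ = -pd 0 (pd 1 b) x := by rw [pd_neg, pd_comm hΩ hb hx]
    _ = -pd 0 (pd 0 a) x := by rw [pd_congr_of_eqOn hΩ h₀.symm hx 0]
  rw [lap, this, add_neg_cancel]

lemma lap_snd_eq_zero (h : CauchyRiemannOn a b Ω) (hΩ : IsOpen Ω)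
    (ha : ContDiffOn ℝ (⊤ : ℕ∞) a Ω) (hx : x ∈ Ω) : lap b x = 0 := by
  obtain ⟨h₀, h₁⟩ := h
  have : pd 1 (pd 1 b) x = -pd 0 (pd 0 b) x := calc
    pd 1 (pd 1 b) x = pd 1 (pd 0 a) x := pd_congr_of_eqOn hΩ h₀.symm hx 1
    _ = pd 0 (pd 1 a) x := pd_comm hΩ ha hx 1 0
    _ = -pd 0 (pd 0 b) x := by rw [pd_congr_of_eqOn hΩ h₁ hx 0, pd_neg]
  rw [lap, this, add_neg_cancel]

/-- The identities behind it: `Δ(a² + b²) = 4 |∇a|²` and `|∇(a² + b²)|² = 4 (a² + b²) |∇a|²`. -/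
lemma lap_log_normSq_eq_zero (h : CauchyRiemannOn a b Ω) (hΩ : IsOpen Ω)
    (ha : ContDiffOn ℝ (⊤ : ℕ∞) a Ω) (hb : ContDiffOn ℝ (⊤ : ℕ∞) b Ω)
    (h0 : ∀ y ∈ Ω, a y * a y + b y * b y ≠ 0) (hx : x ∈ Ω) :
    lap (fun y => log (a y * a y + b y * b y)) x = 0 := by
  have hN : ContDiffOn ℝ (⊤ : ℕ∞) (fun y => a y * a y + b y * b y) Ω :=
    (ha.mul ha).add (hb.mul hb)
  have hd {f : E2 → ℝ} (hf : ContDiffOn ℝ (⊤ : ℕ∞) f Ω) : DifferentiableAt ℝ f x :=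
    hf.differentiableAt_of_isOpen hΩ (by decide) hx
  have hpd (i : Fin 2) :
      pd i (fun y => a y * a y + b y * b y) x = 2 * (a x * pd i a x + b x * pd i b x) := by
    rw [pd_add ((hd ha).fun_mul (hd ha)) ((hd hb).fun_mul (hd hb)), pd_mul (hd ha) (hd ha),
      pd_mul (hd hb) (hd hb)]
    ring
  have hpd_pd (i : Fin 2) : pd i (pd i (fun y => a y * a y + b y * b y)) x
      = pd i (pd i fun y => a y * a y) x + pd i (pd i fun y => b y * b y) x := by
    have hsum : EqOn (pd i fun y => a y * a y + b y * b y)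
        (fun y => pd i (fun y => a y * a y) y + pd i (fun y => b y * b y) y) Ω := fun y hy =>
      pd_add ((ha.mul ha).differentiableAt_of_isOpen hΩ (by decide) hy)
        ((hb.mul hb).differentiableAt_of_isOpen hΩ (by decide) hy) i
    rw [pd_congr_of_eqOn hΩ hsum hx, pd_add (hd ((ha.mul ha).pd hΩ i)) (hd ((hb.mul hb).pd hΩ i))]
  have hlap_a := h.lap_fst_eq_zero hΩ hb hx
  have hlap_b := h.lap_snd_eq_zero hΩ ha hx
  rw [lap] at hlap_a hlap_b
  rw [lap, pd_pd_log hΩ hN h0 hx, pd_pd_log hΩ hN h0 hx, hpd, hpd, hpd_pd, hpd_pd,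
    pd_pd_mul hΩ ha ha hx, pd_pd_mul hΩ ha ha hx, pd_pd_mul hΩ hb hb hx, pd_pd_mul hΩ hb hb hx,
    h.1 hx, h.2 hx]
  have hx0 : a x ^ 2 + b x ^ 2 ≠ 0 := by simpa only [sq] using h0 x hx
  field_simp
  linear_combination (2 * a x * (a x * a x + b x * b x)) * hlap_a
    + (2 * b x * (a x * a x + b x * b x)) * hlap_b

end CauchyRiemannOn

section HarmonicHessian

variable {Ω : Set E2} {v : E2 → ℝ}

lemma pd_one_pd_one_eq_neg_of_lap_eq_zero (hharm : ∀ y ∈ Ω, lap v y = 0) :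
    EqOn (pd 1 (pd 1 v)) (fun y => -pd 0 (pd 0 v) y) Ω :=
  fun y hy => eq_neg_of_add_eq_zero_right (hharm y hy)

lemma cauchyRiemannOn_pd_pd (hΩ : IsOpen Ω) (hv : ContDiffOn ℝ (⊤ : ℕ∞) v Ω)
    (hharm : ∀ y ∈ Ω, lap v y = 0) : CauchyRiemannOn (pd 0 (pd 1 v)) (pd 0 (pd 0 v)) Ω := by
  refine ⟨fun y hy => ?_, fun y hy => ?_⟩
  · calc pd 0 (pd 0 (pd 1 v)) y = pd 0 (pd 1 (pd 0 v)) y :=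
          pd_congr_of_eqOn hΩ (fun z hz => pd_comm hΩ hv hz 0 1) hy 0
      _ = pd 1 (pd 0 (pd 0 v)) y := pd_comm hΩ (hv.pd hΩ 0) hy 0 1
  · calc pd 1 (pd 0 (pd 1 v)) y = pd 0 (pd 1 (pd 1 v)) y := pd_comm hΩ (hv.pd hΩ 1) hy 1 0
      _ = -pd 0 (pd 0 (pd 0 v)) y := by
          rw [pd_congr_of_eqOn hΩ (pd_one_pd_one_eq_neg_of_lap_eq_zero hharm) hy 0, pd_neg]

lemma neg_hessDet_eq_of_lap_eq_zero (hΩ : IsOpen Ω) (hv : ContDiffOn ℝ (⊤ : ℕ∞) v Ω)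
    (hharm : ∀ y ∈ Ω, lap v y = 0) {y : E2} (hy : y ∈ Ω) :
    -hessDet v y = pd 0 (pd 1 v) y * pd 0 (pd 1 v) y + pd 0 (pd 0 v) y * pd 0 (pd 0 v) y := by
  simp only [hessDet, hess]
  rw [pd_one_pd_one_eq_neg_of_lap_eq_zero hharm hy, pd_comm hΩ hv hy 1 0]
  ring

end HarmonicHessian

theorem stmt7_general (Ω : Set E2) (hΩ : IsOpen Ω)
    (v : E2 → ℝ) (hv : ContDiffOn ℝ (⊤ : ℕ∞) v Ω)
    (hharm : ∀ x ∈ Ω, hess v x 0 0 + hess v x 1 1 = 0)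
    (c₀ : ℝ) (hc₀ : c₀ < 0)
    (hfneg : ∀ x ∈ Ω, hessDet v x ≤ c₀) :
    ∀ x ∈ Ω,
      pd 0 (pd 0 (fun y => Real.log (-(hessDet v y)))) x
        + pd 1 (pd 1 (fun y => Real.log (-(hessDet v y)))) x = 0 := by
  intro x hx
  have hdet {y : E2} (hy : y ∈ Ω) := neg_hessDet_eq_of_lap_eq_zero hΩ hv hharm hy
  have hdet_ne {y : E2} (hy : y ∈ Ω) : -hessDet v y ≠ 0 := by linarith [hfneg y hy]
  change lap (fun y => log (-hessDet v y)) x = 0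
  rw [lap_congr_of_eqOn hΩ (fun y hy => congrArg log (hdet hy)) hx]
  exact (cauchyRiemannOn_pd_pd hΩ hv hharm).lap_log_normSq_eq_zero hΩ
    ((hv.pd hΩ 1).pd hΩ 0) ((hv.pd hΩ 0).pd hΩ 0) (fun y hy => hdet hy ▸ hdet_ne hy) hx

/-- if `v` is smooth and harmonic on an open bounded simply connected `Ω ⊂ ℝ²`
and `f := det ∇²v ≤ c₀ < 0` on `Ω`, then `Δ(log(−f)) = 0` on `Ω`. -/
theorem stmt7 (Ω : Set E2) (hΩ : IsOpen Ω) (hbdd : Bornology.IsBounded Ω)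
    (hsc : SimplyConnectedSpace Ω)
    (v : E2 → ℝ) (hv : ContDiffOn ℝ (⊤ : ℕ∞) v Ω)
    (hharm : ∀ x ∈ Ω, hess v x 0 0 + hess v x 1 1 = 0)
    (c₀ : ℝ) (hc₀ : c₀ < 0)
    (hfneg : ∀ x ∈ Ω, hessDet v x ≤ c₀) :
    ∀ x ∈ Ω,
      pd 0 (pd 0 (fun y => Real.log (-(hessDet v y)))) x
        + pd 1 (pd 1 (fun y => Real.log (-(hessDet v y)))) x = 0 :=
  stmt7_general Ω hΩ v hv hharm c₀ hc₀ hfneg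
end
end

section
/- Let f : (0,1) → ℝ be measurable with ∫₀¹ s|f(s)| ds < ∞. Let g : [0,1) → ℝ be continuously differentiable on [0,1) and twice continuously differentiable on (0,1), and set v(x) = g(|x|) on B(0,1). Assume det∇²v(x) = f(|x|) for all x ∈ B(0,1) \ {0} and that ∫_{B(0,1)\{0}} |∇²v|² dx < ∞. Then g'(r)² = ∫₀^r 2s f(s) ds for every r ∈ (0,1). In particular there is at most one (up to an additive constant and sign of g') such radial function v. -/
noncomputable section

open Real MeasureTheory

/-- Squared Frobenius norm of a 2×2 matrix. -/
def frob2 (M : Fin 2 → Fin 2 → ℝ) : ℝ := ∑ i : Fin 2, ∑ j : Fin 2, (M i j) ^ 2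

/-!
At `x ≠ 0` with `r = ‖x‖`, the Hessian of `v = g ∘ ‖·‖` is `a x xᵀ + b I` with `b = g'(r) / r` and
`a r² + b = g''(r)`. Hence `det ∇²v = g' g'' / r` and `|∇²v|² = g''² + (g' / r)²`, so the equation
says `(g'²)' = 2 s f(s)` on `(0, 1)`, and integrating from `0` gives
`g'(r)² = g'(0)² + ∫₀ʳ 2 s f(s) ds`. Finally `g'(0) = 0`: otherwise `|∇²v|² ≥ c / |x|²` near the
origin for some `c > 0`, and `|x|⁻²` is not integrable near `0` in the plane.
-/

open Set Filter Topology Metric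

theorem hasFDerivAt_norm_of_ne_zero {F : Type*} [NormedAddCommGroup F] [InnerProductSpace ℝ F]
    {x : F} (hx : x ≠ 0) : HasFDerivAt (fun y : F => ‖y‖) (‖x‖⁻¹ • innerSL ℝ x) x := by
  have hs := (hasDerivAt_sqrt (pow_ne_zero 2 (norm_ne_zero_iff.2 hx))).comp_hasFDerivAt x
    (hasStrictFDerivAt_norm_sq x).hasFDerivAt
  simp only [Function.comp_def, sqrt_sq (norm_nonneg _)] at hs
  refine hs.congr_fderiv ?_
  ext y
  simp only [one_div, mul_inv_rev, smul_apply, coe_innerSL_apply, nsmul_eq_mul, Nat.cast_ofNat,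
    smul_eq_mul]
  field_simp

theorem HasDerivAt.hasFDerivAt_comp_norm {F : Type*} [NormedAddCommGroup F]
    [InnerProductSpace ℝ F] {φ : ℝ → ℝ} {φ' : ℝ} {x : F} (hx : x ≠ 0)
    (hφ : HasDerivAt φ φ' ‖x‖) :
    HasFDerivAt (fun y : F => φ ‖y‖) ((φ' / ‖x‖) • innerSL ℝ x) x :=
  (hφ.comp_hasFDerivAt x (hasFDerivAt_norm_of_ne_zero hx)).congr_fderiv <| by
    rw [smul_smul, div_eq_mul_inv]

theorem pd_comp_norm {φ : ℝ → ℝ} {x : E2} (hx : x ≠ 0) (hφ : DifferentiableAt ℝ φ ‖x‖)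
    (j : Fin 2) : pd j (fun y => φ ‖y‖) x = deriv φ ‖x‖ / ‖x‖ * x j := by
  rw [pd, (hφ.hasDerivAt.hasFDerivAt_comp_norm hx).fderiv]
  simp [EuclideanSpace.inner_single_right]

theorem hess_comp_norm {g : ℝ → ℝ} {x : E2} (hx : x ≠ 0) (hg : ContDiffAt ℝ 2 g ‖x‖) :
    hess (fun y => g ‖y‖) x = fun i j =>
      (deriv (deriv g) ‖x‖ - deriv g ‖x‖ / ‖x‖) / ‖x‖ ^ 2 * (x i * x j)
        + deriv g ‖x‖ / ‖x‖ * if i = j then 1 else 0 := by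
  ext i j
  have hr : ‖x‖ ≠ 0 := norm_ne_zero_iff.2 hx
  have hpd : pd j (fun y => g ‖y‖) =ᶠ[𝓝 x] fun y => deriv g ‖y‖ / ‖y‖ * y j := by
    filter_upwards [eventually_ne_nhds hx,
      continuous_norm.continuousAt.eventually ((hg.eventually (by simp)).mono
        fun s hs => hs.differentiableAt (by norm_num))] with y hy hgy
    exact pd_comp_norm hy hgy j
  have hψ : HasDerivAt (fun s => deriv g s / s)
      ((deriv (deriv g) ‖x‖ * ‖x‖ - deriv g ‖x‖ * 1) / ‖x‖ ^ 2) ‖x‖ :=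
    ((hg.derivWithin (m := 1) (by norm_num)).differentiableAt (by norm_num)).hasDerivAt.div
      (hasDerivAt_id _) hr
  have hprod : HasFDerivAt (fun y : E2 => deriv g ‖y‖ / ‖y‖ * y j) _ x :=
    (hψ.hasFDerivAt_comp_norm hx).mul (EuclideanSpace.proj j : E2 →L[ℝ] ℝ).hasFDerivAt
  rw [hess, pd, hpd.fderiv_eq, hprod.fderiv]
  rcases eq_or_ne i j with rfl | hij
  · simp only [mul_one, add_apply, smul_apply, PiLp.proj_apply, PiLp.single_eq_same, smul_eq_mul,
      coe_innerSL_apply, EuclideanSpace.inner_single_right, RCLike.conj_to_real, one_mul,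
      ↓reduceIte]
    field_simp
    ring
  · simp only [mul_one, add_apply, smul_apply, PiLp.proj_apply, ne_eq, hij.symm, not_false_eq_true, PiLp.single_eq_of_ne, smul_eq_mul,
      mul_zero, coe_innerSL_apply, EuclideanSpace.inner_single_right, RCLike.conj_to_real,
      one_mul, zero_add, hij, ↓reduceIte, add_zero]
    field_simp

theorem norm_sq_eq_sq_add_sq (x : E2) : ‖x‖ ^ 2 = x 0 ^ 2 + x 1 ^ 2 := by
  simp [EuclideanSpace.norm_sq_eq, Fin.sum_univ_two]

theorem hessDet_eq_of_hess_eq {v : E2 → ℝ} {x : E2} {a b : ℝ}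
    (h : hess v x = fun i j => a * (x i * x j) + b * if i = j then 1 else 0) :
    hessDet v x = b * (a * ‖x‖ ^ 2 + b) := by
  simp only [hessDet, h, Fin.isValue, ↓reduceIte, zero_ne_one, one_ne_zero, mul_one, mul_zero,
    add_zero]
  linear_combination (-a * b) * norm_sq_eq_sq_add_sq x

theorem frob2_hess_eq_of_hess_eq {v : E2 → ℝ} {x : E2} {a b : ℝ}
    (h : hess v x = fun i j => a * (x i * x j) + b * if i = j then 1 else 0) :
    frob2 (hess v x) = (a * ‖x‖ ^ 2 + b) ^ 2 + b ^ 2 := by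
  simp only [frob2, Fin.sum_univ_two, h, Fin.isValue, ↓reduceIte, zero_ne_one, one_ne_zero,
    mul_one, mul_zero, add_zero]
  linear_combination (-(a ^ 2 * (x 0 ^ 2 + x 1 ^ 2 + ‖x‖ ^ 2) + 2 * a * b)) *
    norm_sq_eq_sq_add_sq x

theorem hessDet_comp_norm {g : ℝ → ℝ} {x : E2} (hx : x ≠ 0) (hg : ContDiffAt ℝ 2 g ‖x‖) :
    hessDet (fun y => g ‖y‖) x = deriv g ‖x‖ * deriv (deriv g) ‖x‖ / ‖x‖ := by
  have hr : ‖x‖ ≠ 0 := norm_ne_zero_iff.2 hx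
  rw [hessDet_eq_of_hess_eq (hess_comp_norm hx hg)]
  field_simp
  ring

theorem frob2_hess_comp_norm {g : ℝ → ℝ} {x : E2} (hx : x ≠ 0) (hg : ContDiffAt ℝ 2 g ‖x‖) :
    frob2 (hess (fun y => g ‖y‖) x) = deriv (deriv g) ‖x‖ ^ 2 + (deriv g ‖x‖ / ‖x‖) ^ 2 := by
  have hr : ‖x‖ ≠ 0 := norm_ne_zero_iff.2 hx
  rw [frob2_hess_eq_of_hess_eq (hess_comp_norm hx hg)]
  field_simp
  ring

theorem derivWithin_Ico_eqOn_deriv (g : ℝ → ℝ) (a b : ℝ) :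
    EqOn (derivWithin g (Ico a b)) (deriv g) (Ioo a b) := fun _ hs =>
  derivWithin_of_mem_nhds (mem_of_superset (isOpen_Ioo.mem_nhds hs) Ioo_subset_Ico_self)

theorem tendsto_deriv_nhdsGT_of_contDiffOn_Ico {g : ℝ → ℝ} {a b : ℝ} (hab : a < b)
    (hg : ContDiffOn ℝ 1 g (Ico a b)) :
    Tendsto (deriv g) (𝓝[>] a) (𝓝 (derivWithin g (Ico a b) a)) := by
  have hcont := hg.continuousOn_derivWithin (uniqueDiffOn_Ico a b) le_rfl a (left_mem_Ico.2 hab)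
  rw [← nhdsWithin_Ioo_eq_nhdsGT hab]
  exact (hcont.mono Ioo_subset_Ico_self).tendsto.congr'
    ((derivWithin_Ico_eqOn_deriv g a b).eventuallyEq_of_mem self_mem_nhdsWithin)

theorem sq_deriv_eq_add_integral {g ρ : ℝ → ℝ} {a b r : ℝ} (hg1 : ContDiffOn ℝ 1 g (Ico a b))
    (hg2 : ContDiffOn ℝ 2 g (Ioo a b))
    (hρ : ∀ s ∈ Ioo a b, ρ s = 2 * deriv g s * deriv (deriv g) s)
    (hρint : IntegrableOn ρ (Ioo a b)) (hr : r ∈ Ioo a b) :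
    deriv g r ^ 2 = derivWithin g (Ico a b) a ^ 2 + ∫ s in Ioo a r, ρ s := by
  have hsub : Ioo a r ⊆ Ioo a b := Ioo_subset_Ioo_right hr.2.le
  have hderiv : ∀ s ∈ Ioo a r, HasDerivAt (fun s => derivWithin g (Ico a b) s ^ 2) (ρ s) s := by
    intro s hs
    have hg2s : HasDerivAt (deriv g) (deriv (deriv g) s) s :=
      (((hg2.contDiffAt (isOpen_Ioo.mem_nhds (hsub hs))).derivWithin (m := 1) (by norm_num)
        ).differentiableAt (by norm_num)).hasDerivAt
    refine ((hg2s.pow 2).congr_of_eventuallyEq ?_).congr_deriv ?_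
    · filter_upwards [isOpen_Ioo.mem_nhds (hsub hs)] with t ht
      rw [derivWithin_Ico_eqOn_deriv g a b ht, Pi.pow_apply]
    · rw [hρ s (hsub hs)]
      push_cast
      ring
  have hFTC := intervalIntegral.integral_eq_sub_of_hasDerivAt_of_le hr.1.le
    (((hg1.continuousOn_derivWithin (uniqueDiffOn_Ico a b) le_rfl).mono
      (Icc_subset_Ico_right hr.2)).pow 2) hderiv
    ((intervalIntegrable_iff_integrableOn_Ioo_of_le hr.1.le).2 (hρint.mono_set hsub))
  rw [intervalIntegral.integral_of_le hr.1.le, integral_Ioc_eq_integral_Ioo] at hFTC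
  rw [hFTC, Pi.pow_apply, Pi.pow_apply, derivWithin_Ico_eqOn_deriv g a b hr]
  ring

theorem not_integrableOn_ball_inv_norm_pow_finrank {E : Type*} [NormedAddCommGroup E]
    [NormedSpace ℝ E] [Nontrivial E] [FiniteDimensional ℝ E] [MeasurableSpace E] [BorelSpace E]
    (μ : Measure E) [μ.IsAddHaarMeasure] {r : ℝ} (hr : 0 < r) :
    ¬ IntegrableOn (fun x : E => (‖x‖ ^ Module.finrank ℝ E)⁻¹) (ball 0 r) μ := by
  rw [integrableOn_fun_norm_addHaar μ (f := fun s => (s ^ Module.finrank ℝ E)⁻¹),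
    ← integrableOn_congr_fun (f := fun s => s ^ (-1 : ℝ)) _ measurableSet_Ioo,
    intervalIntegral.integrableOn_Ioo_rpow_iff hr]
  · norm_num
  · intro s hs
    have hd := Module.finrank_pos (R := ℝ) (M := E)
    simp only [rpow_neg_one, smul_eq_mul]
    rw [← pow_sub_one_mul hd.ne' s, mul_inv, ← mul_assoc,
      mul_inv_cancel₀ (pow_ne_zero _ hs.1.ne'), one_mul]

theorem eq_zero_of_integrableOn_of_sq_div_norm_le {φ : ℝ → ℝ} {c : ℝ}
    (hφ : Tendsto φ (𝓝[>] 0) (𝓝 c)) {h : E2 → ℝ} (hint : IntegrableOn h (ball 0 1 \ {0}))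
    (hbound : ∀ x ∈ ball (0 : E2) 1 \ {0}, (φ ‖x‖ / ‖x‖) ^ 2 ≤ h x) : c = 0 := by
  by_contra hc
  obtain ⟨δ, hδ, hφδ⟩ : ∃ δ > 0, ∀ s ∈ Ioo 0 δ, c ^ 2 / 4 ≤ φ s ^ 2 := by
    have : ∀ᶠ s in 𝓝[>] 0, c ^ 2 / 4 < φ s ^ 2 :=
      (hφ.pow 2).eventually (lt_mem_nhds (by
        have : 0 < c ^ 2 := by positivity
        linarith))
    obtain ⟨δ, hδ, hsub⟩ := (nhdsGT_basis 0).mem_iff.1 this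
    exact ⟨δ, hδ, fun s hs => (hsub hs).le⟩
  refine not_integrableOn_ball_inv_norm_pow_finrank (E := E2) volume (lt_min hδ one_pos) ?_
  rw [finrank_euclideanSpace_fin]
  refine IntegrableOn.congr_set_ae ?_ (sdiff_null_ae_eq_self (measure_singleton 0)).symm
  refine ((hint.mono_set ?_).const_mul (4 / c ^ 2)).mono' (by fun_prop) ?_
  · exact sdiff_subset_sdiff_left (ball_subset_ball (min_le_right _ _))
  · filter_upwards [ae_restrict_mem (measurableSet_ball.diff (measurableSet_singleton 0))]
      with x ⟨hxδ, hx0⟩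
    have hxpos : 0 < ‖x‖ := norm_pos_iff.2 hx0
    have hxlt := mem_ball_zero_iff.1 hxδ
    calc ‖(‖x‖ ^ 2)⁻¹‖ = 4 / c ^ 2 * (c ^ 2 / 4 / ‖x‖ ^ 2) := by
          rw [norm_inv, norm_pow, norm_norm]; field_simp
      _ ≤ 4 / c ^ 2 * (φ ‖x‖ / ‖x‖) ^ 2 := by
          gcongr
          rw [div_pow]
          gcongr
          exact hφδ _ ⟨hxpos, hxlt.trans_le (min_le_left _ _)⟩
      _ ≤ 4 / c ^ 2 * h x := by
          gcongr
          exact hbound x ⟨ball_subset_ball (min_le_right _ _) hxδ, hx0⟩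

theorem stmt11_general (f : ℝ → ℝ)
    (hfint : IntegrableOn (fun s => s * |f s|) (Set.Ioo 0 1))
    (g : ℝ → ℝ)
    (hg1 : ContDiffOn ℝ 1 g (Set.Ico 0 1))
    (hg2 : ContDiffOn ℝ 2 g (Set.Ioo 0 1))
    (hdet : ∀ x ∈ Metric.ball (0 : E2) 1 \ {0}, hessDet (fun y => g ‖y‖) x = f ‖x‖)
    (hE : IntegrableOn (fun x => frob2 (hess (fun y => g ‖y‖) x))
      (Metric.ball (0 : E2) 1 \ {0})) :
    ∀ r ∈ Set.Ioo (0 : ℝ) 1, (deriv g r) ^ 2 = ∫ s in Set.Ioo (0 : ℝ) r, 2 * s * f s := by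
  have hg2x : ∀ x ∈ ball (0 : E2) 1 \ {0}, ContDiffAt ℝ 2 g ‖x‖ := fun x hx =>
    hg2.contDiffAt (isOpen_Ioo.mem_nhds ⟨norm_pos_iff.2 hx.2, mem_ball_zero_iff.1 hx.1⟩)
  have hode : ∀ s ∈ Ioo (0 : ℝ) 1, 2 * s * f s = 2 * deriv g s * deriv (deriv g) s := by
    intro s hs
    obtain ⟨x, rfl⟩ := exists_norm_eq E2 hs.1.le
    have hx : x ∈ ball (0 : E2) 1 \ {0} := ⟨mem_ball_zero_iff.2 hs.2, norm_pos_iff.1 hs.1⟩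
    rw [← hdet x hx, hessDet_comp_norm hx.2 (hg2x x hx)]
    field_simp [hs.1.ne']
  have hint : IntegrableOn (fun s => 2 * s * f s) (Ioo 0 1) := by
    have hcont : ContinuousOn (fun s => 2 * deriv g s * deriv (deriv g) s) (Ioo 0 1) :=
      (continuousOn_const.mul (hg2.continuousOn_deriv_of_isOpen isOpen_Ioo (by norm_num))).mul
        ((hg2.deriv_of_isOpen isOpen_Ioo (by norm_num)).continuousOn_deriv_of_isOpen
          isOpen_Ioo le_rfl)
    refine (hfint.const_mul 2).mono' ((hcont.congr hode).aestronglyMeasurable measurableSet_Ioo) ?_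
    filter_upwards [ae_restrict_mem measurableSet_Ioo] with s hs
    simp [abs_of_pos hs.1, mul_assoc]
  have hslope : derivWithin g (Ico 0 1) 0 = 0 :=
    eq_zero_of_integrableOn_of_sq_div_norm_le (tendsto_deriv_nhdsGT_of_contDiffOn_Ico one_pos hg1)
      hE fun x hx => by
        rw [frob2_hess_comp_norm hx.2 (hg2x x hx)]
        exact le_add_of_nonneg_left (sq_nonneg _)
  intro r hr
  rw [sq_deriv_eq_add_integral hg1 hg2 hode hint hr, hslope]
  ring

/-- a radial `W^{2,2}`-type solution `v(x) = g(|x|)` of `det ∇²v = f(|x|)`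
necessarily satisfies `g'(r)² = ∫₀ʳ 2s f(s) ds` on `(0,1)`. -/
theorem stmt11 (f : ℝ → ℝ) (hfm : Measurable f)
    (hfint : IntegrableOn (fun s => s * |f s|) (Set.Ioo 0 1))
    (g : ℝ → ℝ)
    (hg1 : ContDiffOn ℝ 1 g (Set.Ico 0 1))
    (hg2 : ContDiffOn ℝ 2 g (Set.Ioo 0 1))
    (hdet : ∀ x ∈ Metric.ball (0 : E2) 1 \ {0}, hessDet (fun y => g ‖y‖) x = f ‖x‖)
    (hE : IntegrableOn (fun x => frob2 (hess (fun y => g ‖y‖) x))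
      (Metric.ball (0 : E2) 1 \ {0})) :
    ∀ r ∈ Set.Ioo (0 : ℝ) 1, (deriv g r) ^ 2 = ∫ s in Set.Ioo (0 : ℝ) r, 2 * s * f s :=
  stmt11_general f hfint g hg1 hg2 hdet hE
end
end

section
/- Let c > 0 and let f, ψ : (0,1) → ℝ be measurable with c ≤ f(r) ≤ ψ(r) for a.e. r, and suppose f is a.e. nonincreasing: for a.e. r ∈ (0,1) and a.e. x ∈ (0,r], f(r) ≤ f(x). Then, with all quantities valued in [0,∞], ∫₀¹ r³ ψ(r)² / (∫₀^r 2s ψ(s) ds) dr + ∫₀¹ (1/r) (∫₀^r 2s(ψ(s) − f(s)) ds) dr ≥ ∫₀¹ r³ f(r)² / (∫₀^r 2s f(s) ds) dr. -/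
/-!
Write `F(r) = ∫₀ʳ 2s f`, `G(r) = ∫₀ʳ 2s ψ` and `D(r) = ∫₀ʳ 2s(ψ - f)`. Since `f` is nonincreasing,
`F(r) ≥ r² f(r)`, and `F ≤ G ≤ F + D` because `f ≤ ψ`. Hence, pointwise in `r`,
`r³f²/F - r³f²/G = r³f² (G - F)/(F G) ≤ (G - F)/r ≤ D/r` as `F G ≥ r⁴ f²`, and `ψ ≥ f` gives
`r³ψ²/G ≥ r³f²/G`. Integrating this pointwise inequality over `(0,1)` gives the theorem.
-/

open MeasureTheory Set
open scoped ENNReal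

lemma sq_div_le_sq_div_add_div {r x y F G D : ℝ} (hr : 0 < r) (hx : 0 < x) (hxy : x ≤ y)
    (hF : r ^ 2 * x ≤ F) (hFG : F ≤ G) (hGFD : G ≤ F + D) :
    r ^ 3 * x ^ 2 / F ≤ r ^ 3 * y ^ 2 / G + D / r := by
  have hF0 : 0 < F := (by positivity : 0 < r ^ 2 * x).trans_le hF
  have hG0 : 0 < G := hF0.trans_le hFG
  have hFG_sq : (r ^ 2 * x) ^ 2 ≤ F * G := by
    rw [sq]; exact mul_le_mul hF (hF.trans hFG) (by positivity) hF0.le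
  have hcoef : r ^ 3 * x ^ 2 / (F * G) ≤ 1 / r := by
    rw [div_le_div_iff₀ (by positivity) hr]; nlinarith
  calc r ^ 3 * x ^ 2 / F = r ^ 3 * x ^ 2 / G + r ^ 3 * x ^ 2 / (F * G) * (G - F) := by
        field_simp; ring
    _ ≤ r ^ 3 * y ^ 2 / G + 1 / r * D := by
        gcongr
        linarith
    _ = r ^ 3 * y ^ 2 / G + D / r := by ring

lemma ENNReal.ofReal_sq_div_le_sq_div_add_div {r x y : ℝ} {F G D : ℝ≥0∞} (hr : 0 < r)
    (hx : 0 < x) (hxy : x ≤ y) (hF : ENNReal.ofReal (r ^ 2 * x) ≤ F) (hFG : F ≤ G)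
    (hGFD : G ≤ F + D) :
    ENNReal.ofReal (r ^ 3 * x ^ 2) / F
      ≤ ENNReal.ofReal (r ^ 3 * y ^ 2) / G + D / ENNReal.ofReal r := by
  rcases eq_or_ne F ∞ with rfl | hF_top
  · simp
  rcases eq_or_ne D ∞ with rfl | hD_top
  · simp [ENNReal.top_div_of_ne_top ENNReal.ofReal_ne_top]
  have hG_top : G ≠ ∞ := ne_top_of_le_ne_top (ENNReal.add_ne_top.2 ⟨hF_top, hD_top⟩) hGFD
  have hF_real : r ^ 2 * x ≤ F.toReal := (ENNReal.ofReal_le_iff_le_toReal hF_top).1 hF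
  have hF0 : 0 < F.toReal := (by positivity : 0 < r ^ 2 * x).trans_le hF_real
  have hFG_real : F.toReal ≤ G.toReal := ENNReal.toReal_mono hG_top hFG
  have hGFD_real : G.toReal ≤ F.toReal + D.toReal := by
    rw [← ENNReal.toReal_add hF_top hD_top]
    exact ENNReal.toReal_mono (ENNReal.add_ne_top.2 ⟨hF_top, hD_top⟩) hGFD
  calc ENNReal.ofReal (r ^ 3 * x ^ 2) / F = ENNReal.ofReal (r ^ 3 * x ^ 2 / F.toReal) := by
        rw [ENNReal.ofReal_div_of_pos hF0, ENNReal.ofReal_toReal hF_top]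
    _ ≤ ENNReal.ofReal (r ^ 3 * y ^ 2 / G.toReal + D.toReal / r) :=
        ENNReal.ofReal_le_ofReal
          (sq_div_le_sq_div_add_div hr hx hxy hF_real hFG_real hGFD_real)
    _ = ENNReal.ofReal (r ^ 3 * y ^ 2) / G + D / ENNReal.ofReal r := by
        rw [ENNReal.ofReal_add (by positivity) (by positivity),
          ENNReal.ofReal_div_of_pos (hF0.trans_le hFG_real), ENNReal.ofReal_div_of_pos hr,
          ENNReal.ofReal_toReal hG_top, ENNReal.ofReal_toReal hD_top]

lemma setLIntegral_Ioo_ofReal_two_mul_mul_const {r k : ℝ} (hr : 0 ≤ r) (hk : 0 ≤ k) :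
    ∫⁻ s in Ioo 0 r, ENNReal.ofReal (2 * s * k) = ENNReal.ofReal (r ^ 2 * k) := by
  rw [← ofReal_integral_eq_lintegral_ofReal]
  · rw [← integral_Ioc_eq_integral_Ioo, ← intervalIntegral.integral_of_le hr]
    simp_rw [mul_right_comm 2 _ k]
    rw [intervalIntegral.integral_const_mul, integral_id]
    ring_nf
  · exact (by fun_prop : Continuous fun s : ℝ => 2 * s * k).integrableOn_Ioc.mono_set
      Ioo_subset_Ioc_self
  · filter_upwards [ae_restrict_mem measurableSet_Ioo] with s hs
    exact mul_nonneg (mul_nonneg zero_le_two hs.1.le) hk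

lemma ofReal_sq_mul_le_setLIntegral_Ioo {g : ℝ → ℝ} {r k : ℝ} (hr : 0 ≤ r) (hk : 0 ≤ k)
    (hkg : ∀ᵐ s ∂volume.restrict (Ioo 0 r), k ≤ g s) :
    ENNReal.ofReal (r ^ 2 * k) ≤ ∫⁻ s in Ioo 0 r, ENNReal.ofReal (2 * s * g s) := by
  rw [← setLIntegral_Ioo_ofReal_two_mul_mul_const hr hk]
  refine lintegral_mono_ae ?_
  filter_upwards [hkg, ae_restrict_mem measurableSet_Ioo] with s hks hs
  gcongr
  positivity [hs.1]

lemma setLIntegral_ofReal_two_mul_le_add {f ψ : ℝ → ℝ} (hfm : Measurable f) (s : Set ℝ) :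
    ∫⁻ x in s, ENNReal.ofReal (2 * x * ψ x)
      ≤ (∫⁻ x in s, ENNReal.ofReal (2 * x * f x))
        + ∫⁻ x in s, ENNReal.ofReal (2 * x * (ψ x - f x)) := by
  rw [← lintegral_add_left (by fun_prop)]
  refine lintegral_mono fun x => ?_
  exact (congrArg ENNReal.ofReal (by ring)).trans_le ENNReal.ofReal_add_le

lemma ofReal_mul_sq_div_setLIntegral_Ioo_le {f ψ : ℝ → ℝ} {r : ℝ} (hfm : Measurable f)
    (hr : 0 < r) (hfr : 0 < f r) (hfψ : f r ≤ ψ r)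
    (hle : ∀ᵐ s ∂volume.restrict (Ioo 0 r), f r ≤ f s ∧ f s ≤ ψ s) :
    ENNReal.ofReal (r ^ 3 * f r ^ 2) / ∫⁻ s in Ioo 0 r, ENNReal.ofReal (2 * s * f s)
      ≤ ENNReal.ofReal (r ^ 3 * ψ r ^ 2) / (∫⁻ s in Ioo 0 r, ENNReal.ofReal (2 * s * ψ s))
        + (∫⁻ s in Ioo 0 r, ENNReal.ofReal (2 * s * (ψ s - f s))) / ENNReal.ofReal r := by
  refine ENNReal.ofReal_sq_div_le_sq_div_add_div hr hfr hfψ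
    (ofReal_sq_mul_le_setLIntegral_Ioo hr.le hfr.le (hle.mono fun _ h => h.1))
    (lintegral_mono_ae ?_) (setLIntegral_ofReal_two_mul_le_add hfm _)
  filter_upwards [hle, ae_restrict_mem measurableSet_Ioo] with s hs hs_mem
  gcongr
  · positivity [hs_mem.1]
  · exact hs.2

/-- with all quantities valued in `[0,∞]`, if `c ≤ f ≤ ψ` a.e. on `(0,1)` and
`f` is a.e. nonincreasing, then
`∫₀¹ r³ψ²/(∫₀ʳ 2sψ) dr + ∫₀¹ (1/r)(∫₀ʳ 2s(ψ−f)) dr ≥ ∫₀¹ r³f²/(∫₀ʳ 2sf) dr`. -/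
theorem stmt15 (c : ℝ) (hc : 0 < c) (f ψ : ℝ → ℝ)
    (hfm : Measurable f) (hψm : Measurable ψ)
    (hbound : ∀ᵐ r ∂(volume.restrict (Set.Ioo (0 : ℝ) 1)), c ≤ f r ∧ f r ≤ ψ r)
    (hdec : ∀ᵐ r ∂(volume.restrict (Set.Ioo (0 : ℝ) 1)),
      ∀ᵐ x ∂(volume.restrict (Set.Ioc (0 : ℝ) r)), f r ≤ f x) :
    (∫⁻ r in Set.Ioo (0 : ℝ) 1,
        ENNReal.ofReal (r ^ 3 * (ψ r) ^ 2)
          / ∫⁻ s in Set.Ioo (0 : ℝ) r, ENNReal.ofReal (2 * s * ψ s))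
      + (∫⁻ r in Set.Ioo (0 : ℝ) 1,
          (∫⁻ s in Set.Ioo (0 : ℝ) r, ENNReal.ofReal (2 * s * (ψ s - f s)))
            / ENNReal.ofReal r)
    ≥ ∫⁻ r in Set.Ioo (0 : ℝ) 1,
        ENNReal.ofReal (r ^ 3 * (f r) ^ 2)
          / ∫⁻ s in Set.Ioo (0 : ℝ) r, ENNReal.ofReal (2 * s * f s) := by
  have hG_mono : Monotone fun r : ℝ => ∫⁻ s in Ioo 0 r, ENNReal.ofReal (2 * s * ψ s) :=
    fun _ _ h => lintegral_mono_set (Ioo_subset_Ioo_right h)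
  have hpointwise : ∀ᵐ r ∂volume.restrict (Ioo 0 1),
      ENNReal.ofReal (r ^ 3 * f r ^ 2) / ∫⁻ s in Ioo 0 r, ENNReal.ofReal (2 * s * f s)
        ≤ ENNReal.ofReal (r ^ 3 * ψ r ^ 2) / (∫⁻ s in Ioo 0 r, ENNReal.ofReal (2 * s * ψ s))
          + (∫⁻ s in Ioo 0 r, ENNReal.ofReal (2 * s * (ψ s - f s))) / ENNReal.ofReal r := by
    filter_upwards [hbound, hdec, ae_restrict_mem measurableSet_Ioo] with r ⟨hcf, hfψ⟩ hdec_r hr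
    refine ofReal_mul_sq_div_setLIntegral_Ioo_le hfm hr.1 (hc.trans_le hcf) hfψ ?_
    filter_upwards [ae_restrict_of_ae_restrict_of_subset Ioo_subset_Ioc_self hdec_r,
      ae_restrict_of_ae_restrict_of_subset (Ioo_subset_Ioo_right hr.2.le) hbound]
      with s hrs hs using ⟨hrs, hs.2⟩
  calc _ ≤ ∫⁻ r in Ioo 0 1,
          (ENNReal.ofReal (r ^ 3 * ψ r ^ 2) / (∫⁻ s in Ioo 0 r, ENNReal.ofReal (2 * s * ψ s))
            + (∫⁻ s in Ioo 0 r, ENNReal.ofReal (2 * s * (ψ s - f s))) / ENNReal.ofReal r) :=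
        lintegral_mono_ae hpointwise
    _ = _ := lintegral_add_left ((by fun_prop : Measurable fun r : ℝ =>
        ENNReal.ofReal (r ^ 3 * ψ r ^ 2)).div hG_mono.measurable) _
end
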